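/- Let C be a prime (primitive reduced) cycle of length m in a graph X on which a group Γ acts freely by automorphisms. Then the map γ ↦ p(γ), assigning to each element of the stabilizer Γ_C the shift it induces on C, is an injective group homomorphism from Γ_C to ℤ/mℤ; consequently |Γ_C| divides m. -/
import Mathlib


/-- A reduced (proper, tail-less) closed path of length `m`, written cyclically:
`C : ZMod m → V` with consecutive vertices adjacent and no (cyclic) backtracking. -/
def IsReducedCycle {V : Type*} (G : SimpleGraph V) (m : ℕ) (C : ZMod m → V) : Prop :=
  (∀ j, G.Adj (C j) (C (j + 1))) ∧ ∀ j, C (j + 2) ≠ C j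

/-- Let `C` be a prime (primitive reduced) cycle of length `m` in a graph
on which `Γ` acts freely by automorphisms.  Then the map `γ ↦ p(γ)` assigning to each
element of the stabilizer `Γ_C = {γ | ∃ p, γ•C j = C (j - p) ∀ j}` the shift it induces is
an injective group homomorphism `Γ_C → ℤ/mℤ`; consequently `|Γ_C|` divides `m`. -/
theorem stmt6 {V : Type*} {Γ : Type*} [Group Γ] [MulAction Γ V]
    (G : SimpleGraph V)
    (hauto : ∀ (g : Γ) (x y : V), G.Adj (g • x) (g • y) ↔ G.Adj x y)
    (hfree : ∀ (g : Γ) (x : V), g • x = x → g = 1)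
    (m : ℕ) (hm : 0 < m) (C : ZMod m → V) (hC : IsReducedCycle G m C)
    (hprim : ∀ p : ZMod m, (∀ j, C (j + p) = C j) → p = 0) :
    ∃ φ : Γ → ZMod m,
      (∀ γ ∈ {γ : Γ | ∃ p : ZMod m, ∀ j, γ • C j = C (j - p)},
        ∀ j, γ • C j = C (j - φ γ)) ∧
      (∀ γ₁ ∈ {γ : Γ | ∃ p : ZMod m, ∀ j, γ • C j = C (j - p)},
        ∀ γ₂ ∈ {γ : Γ | ∃ p : ZMod m, ∀ j, γ • C j = C (j - p)},
        φ (γ₁ * γ₂) = φ γ₁ + φ γ₂) ∧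
      Set.InjOn φ {γ : Γ | ∃ p : ZMod m, ∀ j, γ • C j = C (j - p)} ∧
      Nat.card {γ : Γ | ∃ p : ZMod m, ∀ j, γ • C j = C (j - p)} ∣ m := by
  classical
  haveI : NeZero m := ⟨hm.ne'⟩
  set S := {γ : Γ | ∃ p : ZMod m, ∀ j, γ • C j = C (j - p)} with hSdef
  -- uniqueness of the shift
  have huniq : ∀ p q : ZMod m, (∀ j, C (j - p) = C (j - q)) → p = q := by
    intro p q h
    have key : ∀ j, C (j + (q - p)) = C j := by
      intro j
      have := h (j + q)
      have e1 : j + q - p = j + (q - p) := by ring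
      have e2 : j + q - q = j := by ring
      rw [e1, e2] at this
      exact this
    have := hprim _ key
    have : q = p := by
      have h' : q - p = 0 := this
      linear_combination h'
    exact this.symm
  -- the shift map
  let φ : Γ → ZMod m := fun γ => if h : γ ∈ S then h.choose else 0
  have hφ : ∀ γ ∈ S, ∀ j, γ • C j = C (j - φ γ) := by
    intro γ hγ j
    simp only [φ, dif_pos hγ]
    exact hγ.choose_spec j
  have hφuniq : ∀ γ ∈ S, ∀ p : ZMod m, (∀ j, γ • C j = C (j - p)) → φ γ = p := by
    intro γ hγ p hp
    exact huniq _ _ fun j => by rw [← hφ γ hγ j, hp j]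
  -- S is a subgroup
  have hone : (1 : Γ) ∈ S := ⟨0, fun j => by simp⟩
  have hmul : ∀ γ₁ ∈ S, ∀ γ₂ ∈ S, ∀ j, (γ₁ * γ₂) • C j = C (j - (φ γ₁ + φ γ₂)) := by
    intro γ₁ h₁ γ₂ h₂ j
    rw [mul_smul, hφ γ₂ h₂ j, hφ γ₁ h₁ (j - φ γ₂)]
    congr 1
    ring
  have hmulS : ∀ γ₁ ∈ S, ∀ γ₂ ∈ S, γ₁ * γ₂ ∈ S := fun γ₁ h₁ γ₂ h₂ =>
    ⟨φ γ₁ + φ γ₂, hmul γ₁ h₁ γ₂ h₂⟩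
  have hinvS : ∀ γ ∈ S, γ⁻¹ ∈ S := by
    intro γ hγ
    refine ⟨-φ γ, fun j => ?_⟩
    have := hφ γ hγ (j + φ γ)
    have e : j + φ γ - φ γ = j := by ring
    rw [e] at this
    rw [← this, inv_smul_smul]
    congr 1
    ring
  have hhom : ∀ γ₁ ∈ S, ∀ γ₂ ∈ S, φ (γ₁ * γ₂) = φ γ₁ + φ γ₂ := by
    intro γ₁ h₁ γ₂ h₂
    exact hφuniq _ (hmulS γ₁ h₁ γ₂ h₂) _ (hmul γ₁ h₁ γ₂ h₂)
  have hinj : Set.InjOn φ S := by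
    intro γ₁ h₁ γ₂ h₂ he
    have : (γ₂⁻¹ * γ₁) • C 0 = C 0 := by
      rw [mul_smul, hφ γ₁ h₁ 0, he, ← hφ γ₂ h₂ 0, inv_smul_smul]
    have := hfree _ _ this
    exact (inv_mul_eq_one.mp this).symm
  refine ⟨φ, hφ, hhom, hinj, ?_⟩
  -- cardinality
  let SG : Subgroup Γ :=
    { carrier := S
      mul_mem' := fun {a b} ha hb => hmulS a ha b hb
      one_mem' := hone
      inv_mem' := fun {a} ha => hinvS a ha }
  have hφone : φ 1 = 0 := hφuniq 1 hone 0 (fun j => by simp)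
  let f : SG →* Multiplicative (ZMod m) :=
    { toFun := fun γ => Multiplicative.ofAdd (φ (γ : Γ))
      map_one' := by simp [hφone]
      map_mul' := fun a b => by
        simp only [Subgroup.coe_mul]
        rw [hhom _ a.2 _ b.2]
        rfl }
  have hfinj : Function.Injective f := by
    intro a b hab
    have : φ (a : Γ) = φ (b : Γ) := by
      simpa [f] using hab
    exact Subtype.ext (hinj a.2 b.2 this)
  have hrange : Nat.card SG = Nat.card f.range :=
    Nat.card_congr (Equiv.ofInjective f hfinj)
  have hcard : Nat.card SG ∣ Nat.card (Multiplicative (ZMod m)) :=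
    hrange ▸ Subgroup.card_subgroup_dvd_card f.range
  have : Nat.card (Multiplicative (ZMod m)) = m := by
    simp [Nat.card_eq_fintype_card]
  rw [this] at hcard
  exact hcard
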